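/- Let a, b be positive integers with b > 1. Then there do not exist rational numbers f, g, h such that f·e(i+1)² + g·e(i+1)·e(i) + h·e(i)² = (−1)^i holds for all nonnegative integers i. -/
import Mathlib


def e2 (a b : ℕ) : ℕ → ℤ
  | 0 => 0
  | 1 => 1
  | (n+2) => a * e2 a b (n+1) + b * e2 a b n

theorem stmt14 (a b : ℕ) (ha : 0 < a) (hb : 1 < b) :
    ¬ ∃ f g h : ℚ, ∀ i : ℕ,
      f * (e2 a b (i+1) : ℚ)^2 + g * (e2 a b (i+1) : ℚ) * (e2 a b i : ℚ)
        + h * (e2 a b i : ℚ)^2 = (-1)^i := by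
  rintro ⟨f, g, h, H⟩
  have hA1 : (1 : ℚ) ≤ (a : ℚ) := by exact_mod_cast ha
  have hB2 : (2 : ℚ) ≤ (b : ℚ) := by exact_mod_cast hb
  set A : ℚ := (a : ℚ)
  set B : ℚ := (b : ℚ)
  have e0 : e2 a b 0 = 0 := rfl
  have e1 : e2 a b 1 = 1 := rfl
  have e2' : e2 a b 2 = (a : ℤ) := by simp [e2]
  have e3 : e2 a b 3 = (a : ℤ) * a + b := by simp [e2]
  have e4 : e2 a b 4 = (a : ℤ) * ((a:ℤ) * a + b) + b * a := by
    show (a : ℤ) * e2 a b 3 + b * e2 a b 2 = _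
    rw [e2', e3]
  have H0 := H 0
  have H1 := H 1
  have H2 := H 2
  have H3 := H 3
  rw [e0, e1] at H0
  rw [e1, e2'] at H1
  rw [e2', e3] at H2
  rw [e3, e4] at H3
  push_cast at H0 H1 H2 H3
  -- f = 1
  have hf : f = 1 := by linarith [H0]
  subst hf
  have P : A^2 + g*A + h + 1 = 0 := by linear_combination H1
  have Q1 : (2*A*B + g*(B+1))*A + (B^2 + h) = 0 := by
    linear_combination H1 + H2 - A^2 * P
  have key : ((2*A*B + g*(B+1))*(A^2+B) + (B^2 + h)*A) * A = 0 := by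
    linear_combination H3 + H2 - (A^2+B)^2 * P
  have R1 : (2*A*B + g*(B+1))*(A^2+B) + (B^2 + h)*A = 0 := by
    rcases mul_eq_zero.mp key with h' | h'
    · exact h'
    · linarith
  have hBc : 2*A*B + g*(B+1) = 0 := by
    have hb0 : (2*A*B + g*(B+1)) * B = 0 := by linear_combination R1 - A*Q1
    rcases mul_eq_zero.mp hb0 with h' | h'
    · exact h'
    · linarith
  have hCc : B^2 + h = 0 := by linear_combination Q1 - A*hBc
  have final : (1-B)*(A^2+(B+1)^2) = 0 := by
    linear_combination (B+1)*P - A*hBc - (B+1)*hCc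
  nlinarith [final, sq_nonneg A, hA1, hB2]
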